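/- Suppose Ω ⊆ ℙ(ℂ^{d+1}) is a proper linearly convex open set. If sequences (p_n), (q_n) in Ω satisfy p_n → x ∈ ∂Ω, q_n → y ∈ ∂Ω, and d_Ω(p_n, q_n) < R for all n and some R > 0, then every complex projective hyperplane H with x ∈ H and H ∩ Ω = ∅ also contains y. -/

import Mathlib

open scoped LinearAlgebra.Projectivization MatrixGroups
open Projectivization

noncomputable section
namespace ComplexConvex

/-! ### Complex projective space and `PSL(d+1, ℂ)` -/

/-- The underlying vector space `ℂ^{d+1}`. -/
abbrev Vd (d : ℕ) : Type := Fin (d + 1) → ℂ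

/-- Complex projective space `ℙ(ℂ^{d+1})`. -/
abbrev CP (d : ℕ) : Type := ℙ ℂ (Vd d)

instance (d : ℕ) : TopologicalSpace (CP d) := instTopologicalSpaceQuotient

abbrev SLd (d : ℕ) : Type := Matrix.SpecialLinearGroup (Fin (d + 1)) ℂ

instance (d : ℕ) : TopologicalSpace (SLd d) :=
  TopologicalSpace.induced (fun g => (g : Matrix (Fin (d + 1)) (Fin (d + 1)) ℂ)) inferInstance

/-- `PSL(d+1, ℂ)`, the quotient of `SL(d+1, ℂ)` by its center. -/
abbrev PSLd (d : ℕ) : Type := Matrix.ProjectiveSpecialLinearGroup (Fin (d + 1)) ℂ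

/-- The projective transformation of `ℙ(ℂ^{d+1})` induced by an element of `SL(d+1,ℂ)`. -/
def slEquiv {d : ℕ} (g : SLd d) : Equiv.Perm (CP d) where
  toFun := Projectivization.map (Matrix.SpecialLinearGroup.toLin' g).toLinearMap
      (Matrix.SpecialLinearGroup.toLin' g).injective
  invFun := Projectivization.map (Matrix.SpecialLinearGroup.toLin' g).symm.toLinearMap
      (Matrix.SpecialLinearGroup.toLin' g).symm.injective
  left_inv := by
    intro x
    induction x using Projectivization.ind with
    | h v hv => rw [Projectivization.map_mk, Projectivization.map_mk]; simp
  right_inv := by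
    intro x
    induction x using Projectivization.ind with
    | h v hv => rw [Projectivization.map_mk, Projectivization.map_mk]; simp

/-- The action of `SL(d+1,ℂ)` on `ℙ(ℂ^{d+1})`, as a homomorphism into permutations. -/
def slPerm (d : ℕ) : SLd d →* Equiv.Perm (CP d) where
  toFun := slEquiv
  map_one' := by
    ext x
    induction x using Projectivization.ind with
    | h v hv =>
      simp only [slEquiv, Equiv.coe_fn_mk, Equiv.Perm.coe_one, id_eq]
      rw [Projectivization.map_mk]
      simp
  map_mul' g h := by
    ext x
    induction x using Projectivization.ind with
    | h v hv =>
      simp only [slEquiv, Equiv.coe_fn_mk, Equiv.Perm.mul_apply]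
      rw [Projectivization.map_mk, Projectivization.map_mk, Projectivization.map_mk]
      simp

/-- The action of `PSL(d+1,ℂ)` on `ℙ(ℂ^{d+1})`. -/
def pslPerm (d : ℕ) : PSLd d →* Equiv.Perm (CP d) :=
  QuotientGroup.lift _ (slPerm d) (by
    intro g hg
    obtain ⟨r, hr, hscalar⟩ := Matrix.SpecialLinearGroup.mem_center_iff.mp hg
    have hr0 : r ≠ 0 := by
      intro h
      rw [h] at hr
      simp at hr
    ext x
    induction x using Projectivization.ind with
    | h v hv =>
      simp only [slPerm, slEquiv, MonoidHom.coe_mk, OneHom.coe_mk, Equiv.coe_fn_mk,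
        Equiv.Perm.coe_one, id_eq]
      rw [Projectivization.map_mk]
      have hval : (Matrix.SpecialLinearGroup.toLin' g).toLinearMap v = r • v := by
        show Matrix.SpecialLinearGroup.toLin' g v = r • v
        rw [Matrix.SpecialLinearGroup.toLin'_apply, Matrix.toLin'_apply, ← hscalar,
          Matrix.scalar_apply]
        funext i
        simp [Matrix.mulVec_diagonal, Pi.smul_apply, smul_eq_mul]
      rw [Projectivization.mk_eq_mk_iff]
      exact ⟨Units.mk0 r hr0, by simp [hval]⟩)

/-! ### Projective subspaces and convexity notions -/

/-- The projective subspace associated with a linear subspace. -/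
def projSet {d : ℕ} (W : Submodule ℂ (Vd d)) : Set (CP d) :=
  {x : CP d | x.submodule ≤ W}

/-- A complex projective line: the projectivization of a 2-dimensional subspace. -/
def IsProjLine {d : ℕ} (L : Set (CP d)) : Prop :=
  ∃ W : Submodule ℂ (Vd d), Module.finrank ℂ W = 2 ∧ L = projSet W

/-- A complex projective hyperplane: the projectivization of a `d`-dimensional subspace. -/
def IsProjHyperplane {d : ℕ} (H : Set (CP d)) : Prop :=
  ∃ W : Submodule ℂ (Vd d), Module.finrank ℂ W = d ∧ H = projSet W

/-- `Ω` is `ℂ`-convex: its intersection with every complex projective line, and the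
complement of this intersection in the line, are connected. -/
def CConvex {d : ℕ} (Ω : Set (CP d)) : Prop :=
  ∀ L : Set (CP d), IsProjLine L → IsPreconnected (L ∩ Ω) ∧ IsPreconnected (L \ Ω)

/-- `Ω` is proper: its closure contains no complex projective line. -/
def IsProperDomain {d : ℕ} (Ω : Set (CP d)) : Prop :=
  ∀ L : Set (CP d), IsProjLine L → ¬ L ⊆ closure Ω

/-- `Ω` is linearly convex: every point of the complement lies on a complex hyperplane
missing `Ω`. -/
def LinearlyConvex {d : ℕ} (Ω : Set (CP d)) : Prop :=
  ∀ p ∈ (Set.univ : Set (CP d)) \ Ω, ∃ H : Set (CP d),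
    IsProjHyperplane H ∧ p ∈ H ∧ H ∩ Ω = ∅

/-- `Ω` is weakly linearly convex: every boundary point lies on a complex hyperplane
missing `Ω`. -/
def WeaklyLinearlyConvex {d : ℕ} (Ω : Set (CP d)) : Prop :=
  ∀ p ∈ frontier Ω, ∃ H : Set (CP d), IsProjHyperplane H ∧ p ∈ H ∧ H ∩ Ω = ∅

/-- `H` is a complex tangent hyperplane of `Ω` at the boundary point `p`. -/
def IsTangentHyperplaneAt {d : ℕ} (Ω H : Set (CP d)) (p : CP d) : Prop :=
  IsProjHyperplane H ∧ p ∈ frontier Ω ∧ p ∈ H ∧ H ∩ Ω = ∅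

/-- `Ω` is strictly `ℂ`-convex: every complex tangent hyperplane of `Ω` meets the boundary
at exactly one point. -/
def StrictlyCConvex {d : ℕ} (Ω : Set (CP d)) : Prop :=
  ∀ (H : Set (CP d)) (p : CP d), IsTangentHyperplaneAt Ω H p → H ∩ frontier Ω = {p}

/-! ### `C^k` boundaries and projective balls -/

/-- A point lies in the affine chart associated to the linear automorphism `A`. -/
def InChart {d : ℕ} (A : Vd d ≃ₗ[ℂ] Vd d) (x : CP d) : Prop :=
  A x.rep 0 ≠ 0

/-- The affine coordinates of a point in the affine chart associated to `A`. -/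
def chartMap {d : ℕ} (A : Vd d ≃ₗ[ℂ] Vd d) (x : CP d) : Fin d → ℂ :=
  fun i => A x.rep i.succ / A x.rep 0

/-- `Ω` has `C^k` boundary: near every boundary point, in some affine chart, the boundary
is the regular zero set of a real-valued `C^k` function. -/
def HasCkBoundary {d : ℕ} (k : WithTop ℕ∞) (Ω : Set (CP d)) : Prop :=
  ∀ x ∈ frontier Ω, ∃ A : Vd d ≃ₗ[ℂ] Vd d, InChart A x ∧
    ∃ (U : Set (Fin d → ℂ)) (F : (Fin d → ℂ) → ℝ),
      IsOpen U ∧ chartMap A x ∈ U ∧ ContDiffOn ℝ k F U ∧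
      (∀ u ∈ U, fderivWithin ℝ F U u ≠ 0) ∧
      (∀ y : CP d, InChart A y → chartMap A y ∈ U → (y ∈ frontier Ω ↔ F (chartMap A y) = 0))

/-- `Ω` is a projective ball: in suitable homogeneous coordinates it is
`{[1 : z₁ : ⋯ : z_d] : ∑ |zᵢ|² < 1}`. -/
def IsProjBall {d : ℕ} (Ω : Set (CP d)) : Prop :=
  ∃ b : Module.Basis (Fin (d + 1)) ℂ (Vd d),
    Ω = {x : CP d | b.repr x.rep 0 ≠ 0 ∧
      ∑ i : Fin d, ‖b.repr x.rep i.succ / b.repr x.rep 0‖ ^ 2 < 1}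

/-! ### Automorphisms, dividing groups -/

/-- The group of projective automorphisms of `Ω`, as a subgroup of `PSL(d+1,ℂ)`. -/
def Aut {d : ℕ} (Ω : Set (CP d)) : Subgroup (PSLd d) where
  carrier := {φ : PSLd d | pslPerm d φ '' Ω = Ω}
  one_mem' := by simp
  mul_mem' := by
    intro a b ha hb
    simp only [Set.mem_setOf_eq] at ha hb ⊢
    have h : ⇑(pslPerm d (a * b)) = ⇑(pslPerm d a) ∘ ⇑(pslPerm d b) := by
      rw [map_mul]; rfl
    rw [h, Set.image_comp, hb, ha]
  inv_mem' := by
    intro a ha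
    simp only [Set.mem_setOf_eq] at ha ⊢
    have h : ⇑(pslPerm d a⁻¹) ∘ ⇑(pslPerm d a) = id := by
      funext x
      rw [map_inv]
      exact Equiv.symm_apply_apply (pslPerm d a) x
    calc pslPerm d a⁻¹ '' Ω = pslPerm d a⁻¹ '' (pslPerm d a '' Ω) := by rw [ha]
      _ = (⇑(pslPerm d a⁻¹) ∘ ⇑(pslPerm d a)) '' Ω := by rw [Set.image_comp]
      _ = Ω := by rw [h, Set.image_id]

/-- `φ` belongs to the identity component `Aut₀(Ω)` of `Aut(Ω)`. -/
def InAut0 {d : ℕ} (Ω : Set (CP d)) (φ : PSLd d) : Prop :=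
  ∃ h : φ ∈ Aut Ω, (⟨φ, h⟩ : Aut Ω) ∈ connectedComponent (1 : Aut Ω)

/-- A subgroup `Γ ≤ PSL(d+1,ℂ)` divides `Ω`: it preserves `Ω` and `Γ ⬝ K = Ω` for some
compact `K ⊆ Ω`. -/
def Divides {d : ℕ} (Γ : Subgroup (PSLd d)) (Ω : Set (CP d)) : Prop :=
  (∀ γ ∈ Γ, pslPerm d γ '' Ω = Ω) ∧
    ∃ K : Set (CP d), K ⊆ Ω ∧ IsCompact K ∧ (⋃ γ ∈ Γ, pslPerm d γ '' K) = Ω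

/-- `Ω` is divisible: some discrete subgroup of `PSL(d+1,ℂ)` divides it. -/
def Divisible {d : ℕ} (Ω : Set (CP d)) : Prop :=
  ∃ Γ : Subgroup (PSLd d), DiscreteTopology Γ ∧ Divides Γ Ω

/-- A subgroup is torsion free. -/
def TorsionFree {d : ℕ} (Γ : Subgroup (PSLd d)) : Prop :=
  ∀ γ ∈ Γ, γ ≠ 1 → ∀ n : ℕ, 0 < n → γ ^ n ≠ 1

/-! ### The Hilbert metric -/

/-- The projectivization of the dual space. -/
abbrev DualP (d : ℕ) : Type := ℙ ℂ (Module.Dual ℂ (Vd d))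

/-- The complex dual `Ω*` of `Ω`. -/
def dualSet {d : ℕ} (Ω : Set (CP d)) : Set (DualP d) :=
  {f : DualP d | ∀ x ∈ Ω, f.rep (Projectivization.rep x) ≠ 0}

/-- The Hilbert (Dubois) metric of a proper linearly convex set. -/
def hilbertDist {d : ℕ} (Ω : Set (CP d)) (v w : CP d) : ℝ :=
  sSup {r : ℝ | ∃ f ∈ dualSet Ω, ∃ g ∈ dualSet Ω,
    r = Real.log ((‖f.rep v.rep‖ * ‖g.rep w.rep‖) /
        (‖f.rep w.rep‖ * ‖g.rep v.rep‖))}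

/-! ### Eigenvalues, proximality -/

/-- The ordered list of moduli of the eigenvalues (with multiplicity) of a matrix. -/
def eigMods {d : ℕ} (g : Matrix (Fin (d + 1)) (Fin (d + 1)) ℂ) : List ℝ :=
  ((g.charpoly.roots).map (fun z : ℂ => ‖z‖)).sort (· ≤ ·)

/-- `σ_i(g)` for `i = 1, …, d+1`: the `i`-th smallest modulus of an eigenvalue of `g`. -/
def sigma' {d : ℕ} (g : Matrix (Fin (d + 1)) (Fin (d + 1)) ℂ) (i : ℕ) : ℝ :=
  (eigMods g).getD (i - 1) 0

/-- An element of `PSL(d+1,ℂ)` is proximal if `σ_d < σ_{d+1}` (for any lift, the property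
being independent of the lift). -/
def IsProximal {d : ℕ} (φ : PSLd d) : Prop :=
  ∀ g : SLd d, (QuotientGroup.mk g : PSLd d) = φ →
    sigma' (g : Matrix (Fin (d + 1)) (Fin (d + 1)) ℂ) d <
      sigma' (g : Matrix (Fin (d + 1)) (Fin (d + 1)) ℂ) (d + 1)

/-- Bi-proximal elements: `φ` and `φ⁻¹` are proximal. -/
def IsBiProximal {d : ℕ} (φ : PSLd d) : Prop :=
  IsProximal φ ∧ IsProximal φ⁻¹

/-- Almost unipotent elements: all eigenvalue moduli equal `1`. -/
def IsAlmostUnipotent {d : ℕ} (φ : PSLd d) : Prop :=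
  ∀ g : SLd d, (QuotientGroup.mk g : PSLd d) = φ →
    ∀ r ∈ eigMods (g : Matrix (Fin (d + 1)) (Fin (d + 1)) ℂ), r = 1

/-- `x` is the attracting fixed point `x⁺_φ`: an eigenline for an eigenvalue of modulus
`σ_{d+1}`. -/
def IsAttractingPoint {d : ℕ} (φ : PSLd d) (x : CP d) : Prop :=
  ∀ g : SLd d, (QuotientGroup.mk g : PSLd d) = φ →
    ∃ μ : ℂ, ‖μ‖ = sigma' (g : Matrix (Fin (d + 1)) (Fin (d + 1)) ℂ) (d + 1) ∧
      (g : Matrix (Fin (d + 1)) (Fin (d + 1)) ℂ).mulVec x.rep = μ • x.rep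

/-- `x` is the repelling fixed point `x⁻_φ`: an eigenline for an eigenvalue of modulus
`σ_1`. -/
def IsRepellingPoint {d : ℕ} (φ : PSLd d) (x : CP d) : Prop :=
  ∀ g : SLd d, (QuotientGroup.mk g : PSLd d) = φ →
    ∃ μ : ℂ, ‖μ‖ = sigma' (g : Matrix (Fin (d + 1)) (Fin (d + 1)) ℂ) 1 ∧
      (g : Matrix (Fin (d + 1)) (Fin (d + 1)) ℂ).mulVec x.rep = μ • x.rep

/-- The operator norm of a matrix with respect to the standard Hermitian norm on
`ℂ^{d+1}`. -/
def opNorm {d : ℕ} (g : Matrix (Fin (d + 1)) (Fin (d + 1)) ℂ) : ℝ :=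
  ‖Matrix.toEuclideanCLM (𝕜 := ℂ) g‖

/-! ### Quasi-isometries, word metrics, the Apollonian metric -/

/-- `f` is an `(A,B)`-quasi-isometric embedding with respect to the distance functions
`dX` and `dY`. -/
def IsQIEmbedding {X Y : Type*} (dX : X → X → ℝ) (dY : Y → Y → ℝ)
    (A B : ℝ) (f : X → Y) : Prop :=
  ∀ x₁ x₂ : X, (1 / A) * dX x₁ x₂ - B ≤ dY (f x₁) (f x₂) ∧
    dY (f x₁) (f x₂) ≤ A * dX x₁ x₂ + B

/-- `f` is an `(A,B)`-quasi-isometry. -/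
def IsQuasiIsometry {X Y : Type*} (dX : X → X → ℝ) (dY : Y → Y → ℝ)
    (A B : ℝ) (f : X → Y) : Prop :=
  IsQIEmbedding dX dY A B f ∧ ∃ R > 0, ∀ y : Y, ∃ x : X, dY y (f x) ≤ R

/-- `(X, dX)` is a quasi-geodesic space: for some `(A,B)`, any two points lie on the image
of an `(A,B)`-quasi-geodesic segment (an `(A,B)`-quasi-isometric embedding of a finite
integer interval with its standard metric). -/
def IsQuasiGeodesicSpace {X : Type*} (dX : X → X → ℝ) : Prop :=
  ∃ A B : ℝ, 0 < A ∧ ∀ x y : X, ∃ (N : ℕ) (f : Fin N → X),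
    (∃ i : Fin N, f i = x) ∧ (∃ j : Fin N, f j = y) ∧
    IsQIEmbedding (fun m n : Fin N => |(m : ℝ) - (n : ℝ)|) dX A B f

/-- The word metric on a group with respect to a generating set `S`. -/
def wordDist {Γ : Type*} [Group Γ] (S : Set Γ) (γ₁ γ₂ : Γ) : ℝ :=
  sInf {r : ℝ | ∃ l : List Γ, (∀ s ∈ l, s ∈ S ∪ S⁻¹) ∧ l.prod = γ₂⁻¹ * γ₁ ∧
    r = l.length}

/-- The Apollonian metric of a bounded set `Ω ⊆ ℂ`, the supremum being taken over
`b₁, b₂ ∈ (ℂ ∪ {∞}) ∖ Ω` with the convention `|z−∞|/|w−∞| = 1` (the terms where `b₁`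
and/or `b₂` equal `∞` are listed separately). -/
def apollonianDist (Ω : Set ℂ) (z w : ℂ) : ℝ :=
  sSup ({(0 : ℝ)} ∪
    {r : ℝ | ∃ b ∈ Ωᶜ, r = Real.log (dist z b / dist w b)} ∪
    {r : ℝ | ∃ b ∈ Ωᶜ, r = Real.log (dist w b / dist z b)} ∪
    {r : ℝ | ∃ b₁ ∈ Ωᶜ, ∃ b₂ ∈ Ωᶜ,
      r = Real.log ((dist z b₁ * dist w b₂) / (dist w b₁ * dist z b₂))})

/-- A `C¹` embedding of the circle into `ℂ`, parameterized `2π`-periodically by `ℝ`. -/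
def IsC1CircleEmbedding (f : ℝ → ℂ) : Prop :=
  ContDiff ℝ 1 f ∧ Function.Periodic f (2 * Real.pi) ∧
    Set.InjOn f (Set.Ico 0 (2 * Real.pi)) ∧ ∀ θ : ℝ, deriv f θ ≠ 0

/-- `Ω` is the bounded open set bounded by the image of the circle embedding `f`. -/
def IsInteriorDomainOf (f : ℝ → ℂ) (Ω : Set ℂ) : Prop :=
  IsOpen Ω ∧ Bornology.IsBounded Ω ∧ IsConnected Ω ∧
    frontier Ω = Set.range f ∧ Ω ∩ Set.range f = ∅


/-!
If `y ∉ H`, let `φ` be a functional with kernel `H`. Linear convexity and properness give a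
functional `ψ` in `Ω*` with `ψ(x) ≠ 0`: otherwise every point `[p̂ + t x̂]` (`p ∈ Ω`) would lie
in `Ω`, and the whole line through `p` and `x` in `closure Ω`. The term
`log |ψ(p̂ₙ) φ(q̂ₙ)| / |ψ(q̂ₙ) φ(p̂ₙ)|` of the supremum defining `d_Ω(pₙ, qₙ)` then tends to
infinity, since `φ(p̂ₙ) → φ(x̂) = 0`. Openness of `Ω` is what keeps that supremum finite
(`sSup` of an unbounded set would be `0`): `ψ ≠ 0` on `[ŵ + t v̂]` for small `t` bounds
`|ψ(v̂)| / |ψ(ŵ)|` uniformly over `Ω*`.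
-/

open Filter Topology

section

variable {d : ℕ}

lemma apply_rep_mk_eq_zero_iff {K V : Type*} [Field K] [AddCommGroup V] [Module K V]
    (ψ : Module.Dual K V) {u : V} (hu : u ≠ 0) : ψ (mk K u hu).rep = 0 ↔ ψ u = 0 := by
  obtain ⟨c, hc⟩ := exists_smul_eq_mk_rep K u hu
  rw [← hc, Units.smul_def, map_smul, smul_eq_mul, mul_eq_zero]
  simp

lemma exists_dual_of_isProjHyperplane {H Ω : Set (CP d)} (hH : IsProjHyperplane H)
    (hHΩ : H ∩ Ω = ∅) :
    ∃ ψ : Module.Dual ℂ (Vd d), (∀ z ∈ Ω, ψ z.rep ≠ 0) ∧ ∀ z, z ∈ H ↔ ψ z.rep = 0 := by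
  obtain ⟨W, hW, rfl⟩ := hH
  have hdim : Module.finrank ℂ (Vd d) = d + 1 := by simp
  have hWlt : W < ⊤ := by
    refine lt_top_iff_ne_top.2 fun h => ?_
    rw [h, finrank_top, hdim] at hW
    omega
  obtain ⟨ψ, hψ0, hψW⟩ := Submodule.exists_dual_map_eq_bot_of_lt_top hWlt inferInstance
  have hker : W = LinearMap.ker ψ := by
    refine Submodule.eq_of_le_of_finrank_eq (LinearMap.le_ker_iff_map.2 hψW) ?_
    have := Module.Dual.finrank_ker_add_one_of_ne_zero hψ0
    omega
  have hmem : ∀ z : CP d, z ∈ projSet W ↔ ψ z.rep = 0 := fun z => by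
    rw [projSet, Set.mem_ofPred_eq, submodule_eq, hker, Submodule.span_singleton_le_iff_mem,
      LinearMap.mem_ker]
  exact ⟨ψ, fun z hz h => hHΩ.subset ⟨(hmem z).2 h, hz⟩, hmem⟩

lemma LinearlyConvex.exists_dual {Ω : Set (CP d)} (hΩ : LinearlyConvex Ω) {z : CP d}
    (hz : z ∉ Ω) : ∃ ψ : Module.Dual ℂ (Vd d), (∀ w ∈ Ω, ψ w.rep ≠ 0) ∧ ψ z.rep = 0 := by
  obtain ⟨H, hH, hzH, hHΩ⟩ := hΩ z ⟨Set.mem_univ z, hz⟩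
  obtain ⟨ψ, hψΩ, hψH⟩ := exists_dual_of_isProjHyperplane hH hHΩ
  exact ⟨ψ, hψΩ, (hψH z).1 hzH⟩

lemma mem_projSet_span_pair {a b : Vd d} (hb : b ≠ 0) {z : CP d}
    (hz : z ∈ projSet (Submodule.span ℂ {a, b})) :
    z = mk ℂ b hb ∨ ∃ (t : ℂ) (h : a + t • b ≠ 0), z = mk ℂ (a + t • b) h := by
  have hrep : z.rep ∈ Submodule.span ℂ {a, b} :=
    hz (by rw [submodule_eq]; exact Submodule.mem_span_singleton_self _)
  obtain ⟨α, β, hαβ⟩ := Submodule.mem_span_pair.1 hrep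
  by_cases hα : α = 0
  · left
    conv_lhs => rw [← z.mk_rep]
    exact (mk_eq_mk_iff' ℂ _ _ _ _).2 ⟨β, by rw [← hαβ, hα, zero_smul, zero_add]⟩
  · right
    have hscale : α • (a + (α⁻¹ * β) • b) = z.rep := by
      rw [smul_add, smul_smul, ← mul_assoc, mul_inv_cancel₀ hα, one_mul, hαβ]
    have hne : a + (α⁻¹ * β) • b ≠ 0 := fun h => z.rep_nonzero (by rw [← hscale, h, smul_zero])
    refine ⟨α⁻¹ * β, hne, ?_⟩
    conv_lhs => rw [← z.mk_rep]
    exact (mk_eq_mk_iff' ℂ _ _ _ _).2 ⟨α, hscale⟩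

lemma isProjLine_projSet_span_pair {z w : CP d} (h : z ≠ w) :
    IsProjLine (projSet (Submodule.span ℂ {z.rep, w.rep})) := by
  have hli := (independent_iff.1 ((independent_pair_iff_ne z w).2 h))
  refine ⟨_, ?_, rfl⟩
  have hrange : Set.range (Projectivization.rep ∘ ![z, w]) = {z.rep, w.rep} := by
    rw [Set.range_comp, Matrix.range_cons, Matrix.range_cons, Matrix.range_empty,
      Set.union_empty, Set.image_union, Set.image_singleton, Set.image_singleton]
    rfl
  rw [← hrange, finrank_span_eq_card hli, Fintype.card_fin]

lemma exists_dual_apply_ne_zero {Ω : Set (CP d)} (hlc : LinearlyConvex Ω)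
    (hproper : IsProperDomain Ω) {p₀ x : CP d} (hp₀ : p₀ ∈ Ω) (hxΩ : x ∉ Ω)
    (hx : x ∈ closure Ω) :
    ∃ ψ : Module.Dual ℂ (Vd d), (∀ z ∈ Ω, ψ z.rep ≠ 0) ∧ ψ x.rep ≠ 0 := by
  by_contra! hcon
  refine hproper _ (isProjLine_projSet_span_pair (ne_of_mem_of_not_mem hp₀ hxΩ)) fun z hz => ?_
  rcases mem_projSet_span_pair x.rep_nonzero hz with rfl | ⟨t, ht, rfl⟩
  · rwa [mk_rep]
  · -- a hyperplane through `[p̂₀ + t x̂]` missing `Ω` would also pass through `x`, hence `p₀`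
    refine subset_closure (by_contra fun hzΩ => ?_)
    obtain ⟨ψ, hψΩ, hψz⟩ := hlc.exists_dual hzΩ
    rw [apply_rep_mk_eq_zero_iff, map_add, map_smul, hcon ψ hψΩ, smul_zero, add_zero] at hψz
    exact hψΩ p₀ hp₀ hψz

lemma isOpen_setOf_mk_mem {Ω : Set (CP d)} (hΩ : IsOpen Ω) :
    IsOpen {u : Vd d | ∃ h : u ≠ 0, mk ℂ u h ∈ Ω} := by
  have hpre : IsOpen ((fun u : {u : Vd d // u ≠ 0} => mk' ℂ u) ⁻¹' Ω) :=
    hΩ.preimage continuous_quotient_mk'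
  convert isOpen_compl_singleton.isOpenMap_subtype_val _ hpre using 1
  ext u
  exact ⟨fun ⟨h, hu⟩ => ⟨⟨u, h⟩, hu, rfl⟩, fun ⟨u', hu', hu⟩ => hu ▸ ⟨u'.2, hu'⟩⟩

lemma exists_norm_apply_le_of_isOpen {Ω : Set (CP d)} (hΩ : IsOpen Ω) {v w : CP d}
    (hv : v ∈ Ω) (hw : w ∈ Ω) :
    ∃ C > 0, ∀ ψ : Module.Dual ℂ (Vd d), (∀ z ∈ Ω, ψ z.rep ≠ 0) →
      ‖ψ v.rep‖ ≤ C * ‖ψ w.rep‖ := by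
  have hopen : IsOpen {t : ℂ | ∃ h : w.rep + t • v.rep ≠ 0, mk ℂ _ h ∈ Ω} :=
    (isOpen_setOf_mk_mem hΩ).preimage (by fun_prop)
  obtain ⟨δ, hδ, hball⟩ := Metric.isOpen_iff.1 hopen 0 ⟨by simpa using w.rep_nonzero, by simpa⟩
  refine ⟨δ⁻¹, inv_pos.2 hδ, fun ψ hψ => ?_⟩
  have hψv := hψ v hv
  -- `ψ` vanishes at `ŵ + t v̂` for this `t`, so `[ŵ + t v̂]` lies outside `Ω`
  have hfar : δ ≤ ‖-(ψ w.rep / ψ v.rep)‖ := by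
    by_contra! ht
    obtain ⟨hne, hmem⟩ := hball (mem_ball_zero_iff.2 ht)
    refine hψ _ hmem ((apply_rep_mk_eq_zero_iff ψ hne).2 ?_)
    rw [map_add, map_smul, smul_eq_mul]
    field_simp
    ring
  rw [norm_neg, norm_div, le_div_iff₀ (norm_pos_iff.2 hψv)] at hfar
  rw [inv_mul_eq_div, le_div_iff₀ hδ]
  linarith

lemma log_le_hilbertDist {Ω : Set (CP d)} (hΩ : IsOpen Ω) {v w : CP d} (hv : v ∈ Ω)
    (hw : w ∈ Ω) {f g : DualP d} (hf : f ∈ dualSet Ω) (hg : g ∈ dualSet Ω) :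
    Real.log ((‖f.rep v.rep‖ * ‖g.rep w.rep‖) / (‖f.rep w.rep‖ * ‖g.rep v.rep‖)) ≤
      hilbertDist Ω v w := by
  refine le_csSup ?_ ⟨f, hf, g, hg, rfl⟩
  obtain ⟨C₁, hC₁, hvw⟩ := exists_norm_apply_le_of_isOpen hΩ hv hw
  obtain ⟨C₂, hC₂, hwv⟩ := exists_norm_apply_le_of_isOpen hΩ hw hv
  refine ⟨Real.log (C₁ * C₂), ?_⟩
  rintro _ ⟨f, hf, g, hg, rfl⟩
  have hfw := norm_pos_iff.2 (hf w hw)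
  have hgv := norm_pos_iff.2 (hg v hv)
  refine Real.log_le_log (div_pos (mul_pos (norm_pos_iff.2 (hf v hv)) (norm_pos_iff.2 (hg w hw)))
    (mul_pos hfw hgv)) ?_
  rw [div_le_iff₀ (mul_pos hfw hgv)]
  calc ‖f.rep v.rep‖ * ‖g.rep w.rep‖
      ≤ (C₁ * ‖f.rep w.rep‖) * (C₂ * ‖g.rep v.rep‖) :=
        mul_le_mul (hvw _ hf) (hwv _ hg) (norm_nonneg _) (by positivity)
    _ = C₁ * C₂ * (‖f.rep w.rep‖ * ‖g.rep v.rep‖) := by ring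

def normEval (ψ : Module.Dual ℂ (Vd d)) : CP d → ℝ :=
  Projectivization.lift (fun u => ‖ψ u.1‖ / ‖u.1‖) fun u v t h => by
    have ht : t ≠ 0 := by rintro rfl; exact u.2 (by simpa using h)
    rw [h, map_smul, norm_smul, norm_smul, mul_div_mul_left _ _ (norm_ne_zero_iff.2 ht)]

lemma normEval_apply (ψ : Module.Dual ℂ (Vd d)) (z : CP d) :
    normEval ψ z = ‖ψ z.rep‖ / ‖z.rep‖ := by
  conv_lhs => rw [← z.mk_rep]
  exact Projectivization.lift_mk ..

lemma continuous_normEval (ψ : Module.Dual ℂ (Vd d)) : Continuous (normEval ψ) :=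
  Continuous.quotient_lift (by fun_prop (disch := exact fun u => norm_ne_zero_iff.2 u.2)) _

lemma normEval_pos {ψ : Module.Dual ℂ (Vd d)} {z : CP d} (h : ψ z.rep ≠ 0) :
    0 < normEval ψ z := by
  rw [normEval_apply]
  exact div_pos (norm_pos_iff.2 h) (norm_pos_iff.2 z.rep_nonzero)

lemma mk_mem_dualSet {Ω : Set (CP d)} {ψ : Module.Dual ℂ (Vd d)} (hψ : ψ ≠ 0)
    (hψΩ : ∀ z ∈ Ω, ψ z.rep ≠ 0) : mk ℂ ψ hψ ∈ dualSet Ω := fun z hz =>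
  (apply_rep_mk_eq_zero_iff (Module.Dual.eval ℂ _ z.rep) hψ).not.2 (hψΩ z hz)

lemma log_normEval_le_hilbertDist {Ω : Set (CP d)} (hΩ : IsOpen Ω) {v w : CP d} (hv : v ∈ Ω)
    (hw : w ∈ Ω) {ψ χ : Module.Dual ℂ (Vd d)} (hψ : ∀ z ∈ Ω, ψ z.rep ≠ 0)
    (hχ : ∀ z ∈ Ω, χ z.rep ≠ 0) :
    Real.log (normEval ψ v * normEval χ w / (normEval ψ w * normEval χ v)) ≤
      hilbertDist Ω v w := by
  have hψ0 : ψ ≠ 0 := fun h => hψ v hv (by simp [h])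
  have hχ0 : χ ≠ 0 := fun h => hχ v hv (by simp [h])
  convert log_le_hilbertDist hΩ hv hw (mk_mem_dualSet hψ0 hψ) (mk_mem_dualSet hχ0 hχ) using 2
  -- the cross-ratio does not depend on the representatives
  obtain ⟨a, ha⟩ := exists_smul_eq_mk_rep ℂ ψ hψ0
  obtain ⟨b, hb⟩ := exists_smul_eq_mk_rep ℂ χ hχ0
  have := norm_pos_iff.2 a.ne_zero
  have := norm_pos_iff.2 b.ne_zero
  have := norm_pos_iff.2 (hψ w hw)
  have := norm_pos_iff.2 (hχ v hv)
  have := norm_pos_iff.2 v.rep_nonzero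
  have := norm_pos_iff.2 w.rep_nonzero
  simp only [normEval_apply, ← ha, ← hb, Units.smul_def, LinearMap.smul_apply, smul_eq_mul,
    norm_mul]
  field_simp

lemma tendsto_log_normEval_crossRatio_atTop {p q : ℕ → CP d} {x y : CP d}
    (hp : Tendsto p atTop (𝓝 x)) (hq : Tendsto q atTop (𝓝 y)) {ψ χ : Module.Dual ℂ (Vd d)}
    (hψx : ψ x.rep ≠ 0) (hχx : χ x.rep = 0) (hχy : χ y.rep ≠ 0)
    (hψq : ∀ n, ψ (q n).rep ≠ 0) (hχp : ∀ n, χ (p n).rep ≠ 0) :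
    Tendsto (fun n => Real.log (normEval ψ (p n) * normEval χ (q n) /
      (normEval ψ (q n) * normEval χ (p n)))) atTop atTop := by
  have hnum : Tendsto (fun n => normEval ψ (p n) * normEval χ (q n)) atTop
      (𝓝 (normEval ψ x * normEval χ y)) :=
    (((continuous_normEval ψ).tendsto x).comp hp).mul
      (((continuous_normEval χ).tendsto y).comp hq)
  have hden : Tendsto (fun n => normEval ψ (q n) * normEval χ (p n)) atTop (𝓝[>] 0) := by
    refine tendsto_nhdsWithin_of_tendsto_nhds_of_eventually_within _ ?_
      (Eventually.of_forall fun n => mul_pos (normEval_pos (hψq n)) (normEval_pos (hχp n)))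
    have := (((continuous_normEval ψ).tendsto y).comp hq).mul
      (((continuous_normEval χ).tendsto x).comp hp)
    rwa [Function.comp_def, Function.comp_def, normEval_apply χ x, hχx, norm_zero, zero_div,
      mul_zero] at this
  exact Real.tendsto_log_atTop.comp <| hnum.pos_mul_atTop
    (mul_pos (normEval_pos hψx) (normEval_pos hχy)) hden.inv_tendsto_nhdsGT_zero

end

theorem statement_11_general {d : ℕ} (Ω : Set (CP d)) (hΩopen : IsOpen Ω)
    (hlc : LinearlyConvex Ω) (hproper : IsProperDomain Ω)
    (p q : ℕ → CP d) (x y : CP d) (R : ℝ)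
    (hp : ∀ n, p n ∈ Ω) (hq : ∀ n, q n ∈ Ω)
    (hplim : Filter.Tendsto p Filter.atTop (nhds x))
    (hqlim : Filter.Tendsto q Filter.atTop (nhds y))
    (hdist : ∀ n, hilbertDist Ω (p n) (q n) < R) :
    ∀ H : Set (CP d), IsProjHyperplane H → x ∈ H → H ∩ Ω = ∅ → y ∈ H := by
  intro H hH hxH hHΩ
  by_contra hyH
  obtain ⟨φ, hφΩ, hφH⟩ := exists_dual_of_isProjHyperplane hH hHΩ
  have hxΩ : x ∉ Ω := fun hxΩ => hHΩ.subset ⟨hxH, hxΩ⟩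
  obtain ⟨ψ, hψΩ, hψx⟩ := exists_dual_apply_ne_zero hlc hproper (hp 0) hxΩ
    (mem_closure_of_tendsto hplim (Eventually.of_forall hp))
  have hdiv := tendsto_log_normEval_crossRatio_atTop hplim hqlim hψx ((hφH x).1 hxH)
    (mt (hφH y).2 hyH) (fun n => hψΩ _ (hq n)) (fun n => hφΩ _ (hp n))
  obtain ⟨n, hn⟩ := (hdiv.eventually_ge_atTop R).exists
  exact (hdist n).not_ge <|
    hn.trans (log_normEval_le_hilbertDist hΩopen (hp n) (hq n) hψΩ hφΩ)

/-- Boundary behavior of the Hilbert metric: boundedly-apart sequences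
converging to boundary points have common complex tangent hyperplanes. -/
theorem statement_11 {d : ℕ} (Ω : Set (CP d)) (hΩopen : IsOpen Ω)
    (hlc : LinearlyConvex Ω) (hproper : IsProperDomain Ω)
    (p q : ℕ → CP d) (x y : CP d) (R : ℝ) (hR : 0 < R)
    (hp : ∀ n, p n ∈ Ω) (hq : ∀ n, q n ∈ Ω)
    (hx : x ∈ frontier Ω) (hy : y ∈ frontier Ω)
    (hplim : Filter.Tendsto p Filter.atTop (nhds x))
    (hqlim : Filter.Tendsto q Filter.atTop (nhds y))
    (hdist : ∀ n, hilbertDist Ω (p n) (q n) < R) :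
    ∀ H : Set (CP d), IsProjHyperplane H → x ∈ H → H ∩ Ω = ∅ → y ∈ H :=
  statement_11_general Ω hΩopen hlc hproper p q x y R hp hq hplim hqlim hdist

end ComplexConvex
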